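/- (Fundamental theorem, (c) ⇒ (d)): Fix 1 ≤ t ≤ t+k ≤ T. If F_{t−1,t+k} ∩ L^0_+(𝓕_{t+k}) = {0}, then F_{t−1,t+k} is closed with respect to convergence in probability: if ξ^n ∈ F_{t−1,t+k} and ξ^n → ζ in probability, then ζ ∈ F_{t−1,t+k}. -/

import Mathlib

open MeasureTheory Filter Finset
open scoped ENNReal NNReal

noncomputable section

namespace BidAskFTAP

variable {Ω : Type*}

/-- Componentwise positive part of a vector in `ℝ^d`. -/
def posPart {d : ℕ} (x : Fin d → ℝ) : Fin d → ℝ := fun i => max (x i) 0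

/-- Componentwise negative part of a vector in `ℝ^d`. -/
def negPart {d : ℕ} (x : Fin d → ℝ) : Fin d → ℝ := fun i => max (-(x i)) 0

/-- Inner product on `ℝ^d`. -/
def dotp {d : ℕ} (x y : Fin d → ℝ) : ℝ := ∑ i, x i * y i

section Market

variable [m : MeasurableSpace Ω] {d : ℕ}

/-- `F` is a filtration on `(Ω, m)` with horizon `T`: monotone, sub-σ-algebras of `m`,
and `F T = m` (i.e. `𝓕_T = 𝓕`). -/
def IsFiltration (F : ℕ → MeasurableSpace Ω) (T : ℕ) : Prop :=
  Monotone F ∧ (∀ t, F t ≤ m) ∧ F T = m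

/-- Adaptedness of an `ℝ^d`-valued process up to time `T`. -/
def AdaptedProc (F : ℕ → MeasurableSpace Ω) (T : ℕ) (S : ℕ → Ω → Fin d → ℝ) : Prop :=
  ∀ t ≤ T, Measurable[F t] (S t)

/-- Standing assumptions on the bid and ask price processes `S̲ = Sb`, `S̄ = Sa`:
adapted, strictly positive components, and `S̲ ≤ S̄` a.s. -/
def IsBidAsk (P : Measure Ω) (F : ℕ → MeasurableSpace Ω) (T : ℕ)
    (Sb Sa : ℕ → Ω → Fin d → ℝ) : Prop :=
  AdaptedProc F T Sb ∧ AdaptedProc F T Sa ∧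
  (∀ t ≤ T, ∀ i, ∀ᵐ ω ∂P, 0 < Sb t ω i) ∧
  (∀ t ≤ T, ∀ i, ∀ᵐ ω ∂P, 0 < Sa t ω i) ∧
  (∀ t ≤ T, ∀ i, ∀ᵐ ω ∂P, Sb t ω i ≤ Sa t ω i)

/-- A trading strategy on horizon `T`: predictable (`H t` is `𝓕_{t-1}`-measurable),
with the convention `H 0 = 0` (so that `ΔH 1 = H 1`). -/
def IsStrategy (F : ℕ → MeasurableSpace Ω) (T : ℕ) (H : ℕ → Ω → Fin d → ℝ) : Prop :=
  H 0 = 0 ∧ ∀ t, 1 ≤ t → t ≤ T → Measurable[F (t - 1)] (H t)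

/-- Membership in `𝒫_T^+`: componentwise nonnegative. -/
def NonnegStrategy (T : ℕ) (H : ℕ → Ω → Fin d → ℝ) : Prop :=
  ∀ t ≤ T, ∀ ω, ∀ i, 0 ≤ H t ω i

/-- Membership in `𝒫_T^-`: componentwise nonpositive. -/
def NonposStrategy (T : ℕ) (H : ℕ → Ω → Fin d → ℝ) : Prop :=
  ∀ t ≤ T, ∀ ω, ∀ i, H t ω i ≤ 0

/-- Uniformly bounded strategy. -/
def BoundedStrategy (T : ℕ) (H : ℕ → Ω → Fin d → ℝ) : Prop :=
  ∃ C : ℝ, ∀ t ≤ T, ∀ ω, ∀ i, |H t ω i| ≤ C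

/-- The immediate–liquidation value process
`x_T(H) = -∑_{j=1}^T (ΔH_j)⁺·S̄_{j-1} + ∑_{j=1}^T (ΔH_j)⁻·S̲_{j-1} + (H_T)⁺·S̲_T - (H_T)⁻·S̄_T`. -/
def xval (Sb Sa : ℕ → Ω → Fin d → ℝ) (T : ℕ) (H : ℕ → Ω → Fin d → ℝ) (ω : Ω) : ℝ :=
  (∑ j ∈ Icc 1 T, (dotp (negPart (H j ω - H (j - 1) ω)) (Sb (j - 1) ω)
    - dotp (posPart (H j ω - H (j - 1) ω)) (Sa (j - 1) ω)))
  + dotp (posPart (H T ω)) (Sb T ω) - dotp (negPart (H T ω)) (Sa T ω)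

/-- The gain `(H · S)_T = ∑_{j=1}^T H_j · (S_j - S_{j-1})`. -/
def gain (S : ℕ → Ω → Fin d → ℝ) (T : ℕ) (H : ℕ → Ω → Fin d → ℝ) (ω : Ω) : ℝ :=
  ∑ j ∈ Icc 1 T, dotp (H j ω) (S j ω - S (j - 1) ω)

/-- Membership (as elements of `L⁰`, i.e. up to a.s. equality) in
`𝒜_t = ℛ_t - L⁰₊(𝓕_t)`. -/
def memA (P : Measure Ω) (F : ℕ → MeasurableSpace Ω) (Sb Sa : ℕ → Ω → Fin d → ℝ)
    (t : ℕ) (f : Ω → ℝ) : Prop :=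
  ∃ H : ℕ → Ω → Fin d → ℝ, IsStrategy F t H ∧
    ∃ r : Ω → ℝ, Measurable[F t] r ∧ (∀ᵐ ω ∂P, 0 ≤ r ω) ∧
      f =ᵐ[P] fun ω => xval Sb Sa t H ω - r ω

/-- The no-arbitrage condition `𝒜_t ∩ L⁰₊(𝓕_t) = {0}` at horizon `t`. -/
def NA (P : Measure Ω) (F : ℕ → MeasurableSpace Ω) (Sb Sa : ℕ → Ω → Fin d → ℝ)
    (t : ℕ) : Prop :=
  ∀ f : Ω → ℝ, memA P F Sb Sa t f → (∀ᵐ ω ∂P, 0 ≤ f ω) → f =ᵐ[P] 0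

/-- Two measures are equivalent: mutually absolutely continuous. -/
def EquivMeasure (P Q : Measure Ω) : Prop := P ≪ Q ∧ Q ≪ P

/-- The Radon–Nikodym density `dQ/dP` belongs to `L^∞(P)`. -/
def BoundedDensity (P Q : Measure Ω) : Prop :=
  ∃ C : ℝ≥0, ∀ᵐ ω ∂P, Q.rnDeriv P ω ≤ (C : ℝ≥0∞)

/-- `Q` is an equivalent bid-ask martingale measure (EBAMM) for `(S̲, S̄)`:
`Q ∼ P`, all `S̄_t` are `Q`-integrable, and for all `1 ≤ t ≤ T` and coordinates `i`:
`S̲_{t-1}^i ≤ E_Q[S̄_t^i | 𝓕_{t-1}]` and `E_Q[S̲_t^i | 𝓕_{t-1}] ≤ S̄_{t-1}^i` a.s. -/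
def IsEBAMM (P : Measure Ω) (F : ℕ → MeasurableSpace Ω) (T : ℕ)
    (Sb Sa : ℕ → Ω → Fin d → ℝ) (Q : Measure Ω) : Prop :=
  IsProbabilityMeasure Q ∧ EquivMeasure P Q ∧
  (∀ t ≤ T, ∀ i, Integrable (fun ω => Sa t ω i) Q) ∧
  (∀ t, 1 ≤ t → t ≤ T → ∀ i,
    (∀ᵐ ω ∂P, Sb (t - 1) ω i ≤ (Q[fun ω => Sa t ω i | F (t - 1)]) ω) ∧
    (∀ᵐ ω ∂P, (Q[fun ω => Sb t ω i | F (t - 1)]) ω ≤ Sa (t - 1) ω i))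

/-- `(S̃, Q)` is a consistent price system: `Q ∼ P`, `S̃` adapted, evolving between bid and
ask prices, and a `Q`-martingale. -/
def IsCPS (P : Measure Ω) (F : ℕ → MeasurableSpace Ω) (T : ℕ)
    (Sb Sa St : ℕ → Ω → Fin d → ℝ) (Q : Measure Ω) : Prop :=
  IsProbabilityMeasure Q ∧ EquivMeasure P Q ∧ AdaptedProc F T St ∧
  (∀ t ≤ T, ∀ i, Integrable (fun ω => St t ω i) Q) ∧
  (∀ t ≤ T, ∀ i, ∀ᵐ ω ∂P, Sb t ω i ≤ St t ω i ∧ St t ω i ≤ Sa t ω i) ∧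
  (∀ t, 1 ≤ t → t ≤ T → ∀ i,
    Q[fun ω => St t ω i | F (t - 1)] =ᵐ[P] fun ω => St (t - 1) ω i)

/-- `(S̃, Q)` is a supermartingale consistent price system. -/
def IsSupCPS (P : Measure Ω) (F : ℕ → MeasurableSpace Ω) (T : ℕ)
    (Sb Sa St : ℕ → Ω → Fin d → ℝ) (Q : Measure Ω) : Prop :=
  IsProbabilityMeasure Q ∧ EquivMeasure P Q ∧ AdaptedProc F T St ∧
  (∀ t ≤ T, ∀ i, Integrable (fun ω => St t ω i) Q) ∧
  (∀ t ≤ T, ∀ i, ∀ᵐ ω ∂P, Sb t ω i ≤ St t ω i ∧ St t ω i ≤ Sa t ω i) ∧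
  (∀ t, 1 ≤ t → t ≤ T → ∀ i,
    (∀ᵐ ω ∂P, (Q[fun ω => St t ω i | F (t - 1)]) ω ≤ St (t - 1) ω i))

/-- `(S̃, Q)` is a submartingale consistent price system. -/
def IsSubCPS (P : Measure Ω) (F : ℕ → MeasurableSpace Ω) (T : ℕ)
    (Sb Sa St : ℕ → Ω → Fin d → ℝ) (Q : Measure Ω) : Prop :=
  IsProbabilityMeasure Q ∧ EquivMeasure P Q ∧ AdaptedProc F T St ∧
  (∀ t ≤ T, ∀ i, Integrable (fun ω => St t ω i) Q) ∧
  (∀ t ≤ T, ∀ i, ∀ᵐ ω ∂P, Sb t ω i ≤ St t ω i ∧ St t ω i ≤ Sa t ω i) ∧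
  (∀ t, 1 ≤ t → t ≤ T → ∀ i,
    (∀ᵐ ω ∂P, St (t - 1) ω i ≤ (Q[fun ω => St t ω i | F (t - 1)]) ω))

/-- Membership (up to a.s. equality) in
`F_{t-1,t+k} = ℛ_{t-1,t+k}⁺ + ℛ_{t-1,t+k}⁻ - L⁰₊(𝓕_{t+k})`:
`f = Hp·(S̲_{t+k} - S̄_{t-1}) - Hm·(S̄_{t+k} - S̲_{t-1}) - r` with `Hp, Hm ≥ 0`
`𝓕_{t-1}`-measurable and `r ∈ L⁰₊(𝓕_{t+k})`. -/
def memFtk (P : Measure Ω) (F : ℕ → MeasurableSpace Ω) (Sb Sa : ℕ → Ω → Fin d → ℝ)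
    (t k : ℕ) (f : Ω → ℝ) : Prop :=
  ∃ (Hp Hm : Ω → Fin d → ℝ) (r : Ω → ℝ),
    Measurable[F (t - 1)] Hp ∧ Measurable[F (t - 1)] Hm ∧
    (∀ ω i, 0 ≤ Hp ω i) ∧ (∀ ω i, 0 ≤ Hm ω i) ∧
    Measurable[F (t + k)] r ∧ (∀ᵐ ω ∂P, 0 ≤ r ω) ∧
    f =ᵐ[P] fun ω =>
      dotp (Hp ω) (Sb (t + k) ω - Sa (t - 1) ω)
        - dotp (Hm ω) (Sa (t + k) ω - Sb (t - 1) ω) - r ω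

/-- Membership (up to a.s. equality) in
`F_t = ∑_{j<t} ℛ_{j,t}⁺ + ∑_{j<t} ℛ_{j,t}⁻ - L⁰₊(𝓕_t)`. -/
def memFt (P : Measure Ω) (F : ℕ → MeasurableSpace Ω) (Sb Sa : ℕ → Ω → Fin d → ℝ)
    (t : ℕ) (f : Ω → ℝ) : Prop :=
  ∃ (Hp Hm : ℕ → Ω → Fin d → ℝ) (r : Ω → ℝ),
    (∀ j < t, Measurable[F j] (Hp j) ∧ Measurable[F j] (Hm j)) ∧
    (∀ j < t, ∀ ω i, 0 ≤ Hp j ω i ∧ 0 ≤ Hm j ω i) ∧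
    Measurable[F t] r ∧ (∀ᵐ ω ∂P, 0 ≤ r ω) ∧
    f =ᵐ[P] fun ω =>
      (∑ j ∈ range t,
        (dotp (Hp j ω) (Sb t ω - Sa j ω) - dotp (Hm j ω) (Sa t ω - Sb j ω))) - r ω

/-- `x_{s,u}(H) = -H⁺·S̄_s + H⁻·S̲_s + H⁺·S̲_u - H⁻·S̄_u` for an `𝓕_s`-measurable `H`. -/
def xval2 (Sb Sa : ℕ → Ω → Fin d → ℝ) (s u : ℕ) (H : Ω → Fin d → ℝ) (ω : Ω) : ℝ :=
  - dotp (posPart (H ω)) (Sa s ω) + dotp (negPart (H ω)) (Sb s ω)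
    + dotp (posPart (H ω)) (Sb u ω) - dotp (negPart (H ω)) (Sa u ω)

/-- Membership (up to a.s. equality) in `𝒜_{t-1,t+k} = ℛ_{t-1,t+k} - L⁰₊(𝓕_{t+k})` where
`ℛ_{t-1,t+k} = {x_{t-1,t+k}(H) : H ∈ L⁰(ℝ^d, 𝓕_{t-1})}`. -/
def memA2 (P : Measure Ω) (F : ℕ → MeasurableSpace Ω) (Sb Sa : ℕ → Ω → Fin d → ℝ)
    (t k : ℕ) (f : Ω → ℝ) : Prop :=
  ∃ (H : Ω → Fin d → ℝ) (r : Ω → ℝ),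
    Measurable[F (t - 1)] H ∧ Measurable[F (t + k)] r ∧ (∀ᵐ ω ∂P, 0 ≤ r ω) ∧
    f =ᵐ[P] fun ω => xval2 Sb Sa (t - 1) (t + k) H ω - r ω

end Market

end BidAskFTAP

/-!
Write `V` for the vector of the `2d` round-trip gains from `t - 1` to `t + k`, so that
`F_{t-1,t+k}` consists of the `ζ ≤ c ⬝ᵥ V` with `c ≥ 0` `𝓕_{t-1}`-measurable. Pass to an a.s.
convergent subsequence `ξ n ≤ c n ⬝ᵥ V`. Where `‖c n‖` does not tend to infinity, a measurably
chosen random subsequence of `c n` converges (Kabanov–Stricker) and its limit dominates `ζ`.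
Where `‖c n‖ → ∞`, the normalised positions accumulate at a direction `g ≠ 0` with
`g ⬝ᵥ V ≥ 0`, hence `g ⬝ᵥ V = 0` by no-arbitrage. Subtracting from each `c n` the largest
multiple of `g` that keeps it nonnegative leaves `c n ⬝ᵥ V` unchanged but kills a coordinate;
along a random subsequence on which the same coordinate is always killed, induction on the set of
active coordinates concludes.
-/

open Topology

section RandomSubsequence

variable {Ω : Type*} [MeasurableSpace Ω]

/-- A random subsequence; it need not be monotone, `k ≤ σ ω k` suffices to pass to limits. -/
structure IsRandomSubseq (σ : Ω → ℕ → ℕ) : Prop where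
  measurable_apply : ∀ k, Measurable fun ω => σ ω k
  le_apply : ∀ ω k, k ≤ σ ω k

lemma isRandomSubseq_id : IsRandomSubseq fun (_ : Ω) (k : ℕ) => k :=
  ⟨fun _ => measurable_const, fun _ _ => le_rfl⟩

namespace IsRandomSubseq

variable {σ τ : Ω → ℕ → ℕ}

lemma tendsto_atTop (hσ : IsRandomSubseq σ) (ω : Ω) : Tendsto (σ ω) atTop atTop :=
  tendsto_atTop_mono (hσ.le_apply ω) tendsto_id

lemma measurable_reindex {β : Type*} [MeasurableSpace β] (hσ : IsRandomSubseq σ)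
    {u : ℕ → Ω → β} (hu : ∀ n, Measurable (u n)) (k : ℕ) :
    Measurable fun ω => u (σ ω k) ω :=
  (measurable_from_prod_countable_left (f := fun p : Ω × ℕ => u p.2 p.1) hu).comp
    (measurable_id.prodMk (hσ.measurable_apply k))

lemma comp (hσ : IsRandomSubseq σ) (hτ : IsRandomSubseq τ) :
    IsRandomSubseq fun ω k => σ ω (τ ω k) :=
  ⟨hτ.measurable_reindex hσ.measurable_apply, fun ω k =>
    (hτ.le_apply ω k).trans (hσ.le_apply ω _)⟩

end IsRandomSubseq

lemma measurableSet_frequently_atTop {S : ℕ → Set Ω}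
    (hS : ∀ n, MeasurableSet (S n)) : MeasurableSet {ω | ∃ᶠ n in atTop, ω ∈ S n} := by
  simpa only [← mem_limsup_iff_frequently_mem, Set.ofPred_mem_eq] using
    MeasurableSet.measurableSet_limsup hS

lemma exists_isRandomSubseq_mem (S : ℕ → ℕ → Set Ω) (hS : ∀ k n, MeasurableSet (S k n)) :
    ∃ σ : Ω → ℕ → ℕ, IsRandomSubseq σ ∧ ∀ ω k, (∃ n ≥ k, ω ∈ S k n) → ω ∈ S k (σ ω k) := by
  classical
  let E : ℕ → Set Ω := fun k => ⋃ n ≥ k, S k n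
  have hE : ∀ k, MeasurableSet (E k) := fun k => .biUnion (Set.to_countable _) fun n _ => hS k n
  -- outside `E k` no admissible index exists and we fall back to `k`
  have hex : ∀ ω k, ∃ n, k ≤ n ∧ (ω ∈ S k n ∨ ω ∉ E k) := fun ω k => by
    by_cases h : ω ∈ E k
    · obtain ⟨n, hn, hnS⟩ := Set.mem_iUnion₂.1 h
      exact ⟨n, hn, .inl hnS⟩
    · exact ⟨k, le_rfl, .inr h⟩
  refine ⟨fun ω k => Nat.find (hex ω k), ⟨fun k => measurable_find _ fun n => ?_,
    fun ω k => (Nat.find_spec (hex ω k)).1⟩, fun ω k hω => ?_⟩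
  · exact (MeasurableSet.const _).inter ((hS k n).union (hE k).compl)
  · obtain ⟨n, hn, hnS⟩ := hω
    exact (Nat.find_spec (hex ω k)).2.resolve_right (not_not.2 (Set.mem_biUnion hn hnS))

lemma exists_isRandomSubseq_tendsto_of_bounded {y : ℕ → Ω → ℝ} (hy : ∀ n, Measurable (y n)) :
    ∃ σ, IsRandomSubseq σ ∧ ∃ l : Ω → ℝ, Measurable l ∧
      ∀ ω, (∃ C, ∀ n, |y n ω| ≤ C) → Tendsto (fun k => y (σ ω k) ω) atTop (𝓝 (l ω)) := by
  set b : Ω → ℝ := fun ω => limsup (fun n => y n ω) atTop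
  have hb : Measurable b := Measurable.limsup hy
  obtain ⟨σ, hσ, hσb⟩ := exists_isRandomSubseq_mem
    (fun k n => {ω | b ω - 1 / (k + 1) < y n ω})
    fun k n => measurableSet_lt (hb.sub_const _) (hy n)
  refine ⟨σ, hσ, b, hb, fun ω ⟨C, hC⟩ => ?_⟩
  have hbdd : IsBoundedUnder (· ≤ ·) atTop fun n => y n ω :=
    isBoundedUnder_of ⟨C, fun n => (abs_le.1 (hC n)).2⟩
  have hcobdd : IsCoboundedUnder (· ≤ ·) atTop fun n => y n ω :=
    (isBoundedUnder_of ⟨-C, fun n => (abs_le.1 (hC n)).1⟩).isCoboundedUnder_le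
  have hlow : ∀ k : ℕ, b ω - 1 / (k + 1) < y (σ ω k) ω := fun k =>
    hσb ω k ((frequently_lt_of_lt_limsup hcobdd
      (sub_lt_self _ Nat.one_div_pos_of_nat)).forall_exists_of_atTop k)
  refine tendsto_order.2 ⟨fun a ha => ?_, fun a ha =>
    (hσ.tendsto_atTop ω).eventually (eventually_lt_of_limsup_lt ha hbdd)⟩
  filter_upwards [tendsto_one_div_add_atTop_nhds_zero_nat.eventually
    (gt_mem_nhds (sub_pos.2 ha))] with k hk
  linarith [hlow k]

lemma exists_isRandomSubseq_tendsto_of_bounded_pi {ι : Type*} [Fintype ι]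
    {y : ℕ → Ω → ι → ℝ} (hy : ∀ n, Measurable (y n)) :
    ∃ σ, IsRandomSubseq σ ∧ ∃ l : Ω → ι → ℝ, Measurable l ∧
      ∀ ω, (∃ C, ∀ n, ‖y n ω‖ ≤ C) → Tendsto (fun k => y (σ ω k) ω) atTop (𝓝 (l ω)) := by
  classical
  suffices h : ∀ s : Finset ι, ∃ σ, IsRandomSubseq σ ∧ ∃ l : Ω → ι → ℝ, Measurable l ∧
      ∀ ω, (∃ C, ∀ n, ‖y n ω‖ ≤ C) → ∀ j ∈ s,
        Tendsto (fun k => y (σ ω k) ω j) atTop (𝓝 (l ω j)) by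
    obtain ⟨σ, hσ, l, hl, hconv⟩ := h univ
    exact ⟨σ, hσ, l, hl, fun ω hω => tendsto_pi_nhds.2 fun j => hconv ω hω j (mem_univ j)⟩
  intro s
  induction s using Finset.induction_on with
  | empty => exact ⟨_, isRandomSubseq_id, 0, measurable_const, by simp⟩
  | insert a s ha ih =>
    obtain ⟨σ, hσ, l, hl, hconv⟩ := ih
    obtain ⟨τ, hτ, la, hla, hconva⟩ := exists_isRandomSubseq_tendsto_of_bounded
      (hσ.measurable_reindex fun n => (measurable_pi_apply a).comp (hy n))
    refine ⟨_, hσ.comp hτ, fun ω => Function.update (l ω) a (la ω),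
      measurable_update'.comp (hl.prodMk hla), fun ω ⟨C, hC⟩ j hj => ?_⟩
    rcases mem_insert.1 hj with rfl | hjs
    · simpa using hconva ω ⟨C, fun n => (norm_le_pi_norm _ j).trans (hC _)⟩
    · show Tendsto _ _ (𝓝 (Function.update (l ω) a (la ω) j))
      rw [Function.update_of_ne (ne_of_mem_of_not_mem hjs ha)]
      exact (hconv ω ⟨C, hC⟩ j hjs).comp (hτ.tendsto_atTop ω)

/-- Kabanov–Stricker's random Bolzano–Weierstrass theorem. -/
lemma exists_isRandomSubseq_tendsto {ι : Type*} [Fintype ι] {y : ℕ → Ω → ι → ℝ}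
    (hy : ∀ n, Measurable (y n)) :
    ∃ σ, IsRandomSubseq σ ∧ ∃ l : Ω → ι → ℝ, Measurable l ∧
      ∀ ω, ¬ Tendsto (fun n => ‖y n ω‖) atTop atTop →
        Tendsto (fun k => y (σ ω k) ω) atTop (𝓝 (l ω)) := by
  set L : Ω → ℝ≥0∞ := fun ω => liminf (fun n => ‖y n ω‖ₑ) atTop
  have hL : Measurable L := Measurable.liminf fun n => (hy n).enorm
  -- reduce to the bounded case by first passing to indices where `‖y n ω‖ₑ < L ω + 1`
  obtain ⟨τ, hτ, hτL⟩ := exists_isRandomSubseq_mem (fun _ n => {ω | ‖y n ω‖ₑ < L ω + 1})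
    fun _ n => measurableSet_lt (hy n).enorm (hL.add_const 1)
  obtain ⟨σ, hσ, l, hl, hconv⟩ :=
    exists_isRandomSubseq_tendsto_of_bounded_pi (hτ.measurable_reindex hy)
  refine ⟨_, hτ.comp hσ, l, hl, fun ω hω => hconv ω ⟨(L ω + 1).toReal, fun n => ?_⟩⟩
  obtain ⟨C, hC⟩ : ∃ C, ∃ᶠ n in atTop, ‖y n ω‖ < C := by
    simpa only [tendsto_atTop, not_forall, not_eventually, not_le] using hω
  have hLC : L ω < ⊤ := (liminf_le_of_frequently_le' (hC.mono fun n hn =>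
    (ofReal_norm (y n ω)).symm.trans_le (ENNReal.ofReal_le_ofReal hn.le))).trans_lt
    ENNReal.ofReal_lt_top
  have hfreq : ∃ᶠ n in atTop, ‖y n ω‖ₑ < L ω + 1 :=
    frequently_lt_of_liminf_lt (by isBoundedDefault) (ENNReal.lt_add_right hLC.ne one_ne_zero)
  rw [← toReal_enorm]
  exact ENNReal.toReal_mono (by finiteness) (hτL ω n (hfreq.forall_exists_of_atTop n)).le

end RandomSubsequence

section Normalize

variable {E : Type*} [SeminormedAddCommGroup E]

lemma norm_inv_one_add_norm_smul [NormedSpace ℝ E] (x : E) :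
    ‖(1 + ‖x‖)⁻¹ • x‖ = 1 - (1 + ‖x‖)⁻¹ := by
  have hx : 0 < 1 + ‖x‖ := by positivity
  rw [norm_smul, Real.norm_of_nonneg (inv_nonneg.2 hx.le)]
  field_simp
  ring

lemma norm_inv_one_add_norm_smul_le_one [NormedSpace ℝ E] (x : E) : ‖(1 + ‖x‖)⁻¹ • x‖ ≤ 1 := by
  rw [norm_inv_one_add_norm_smul]
  exact sub_le_self _ (by positivity)

lemma tendsto_inv_one_add_norm {x : ℕ → E} (hx : Tendsto (‖x ·‖) atTop atTop) :
    Tendsto (fun n => (1 + ‖x n‖)⁻¹) atTop (𝓝 0) :=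
  tendsto_inv_atTop_zero.comp (tendsto_atTop_add_const_left _ 1 hx)

lemma tendsto_norm_inv_one_add_norm_smul [NormedSpace ℝ E] {x : ℕ → E}
    (hx : Tendsto (‖x ·‖) atTop atTop) :
    Tendsto (fun n => ‖(1 + ‖x n‖)⁻¹ • x n‖) atTop (𝓝 1) := by
  simpa [norm_inv_one_add_norm_smul] using (tendsto_inv_one_add_norm hx).const_sub 1

lemma dotProduct_nonneg_of_tendsto_normalize {ι : Type*} [Fintype ι] {x : ℕ → ι → ℝ} {a : ℕ → ℝ}
    {b : ℝ} {v g : ι → ℝ}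
    (hx : Tendsto (‖x ·‖) atTop atTop) (ha : Tendsto a atTop (𝓝 b))
    (hax : ∀ n, a n ≤ x n ⬝ᵥ v) (hg : Tendsto (fun n => (1 + ‖x n‖)⁻¹ • x n) atTop (𝓝 g)) :
    0 ≤ g ⬝ᵥ v := by
  have hlow : Tendsto (fun n => (1 + ‖x n‖)⁻¹ * a n) atTop (𝓝 0) := by
    simpa using (tendsto_inv_one_add_norm hx).mul ha
  refine le_of_tendsto_of_tendsto' hlow
    (((continuous_id.dotProduct continuous_const).tendsto _).comp hg) fun n => ?_
  rw [Function.comp_apply, id, smul_dotProduct, smul_eq_mul]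
  exact mul_le_mul_of_nonneg_left (hax n) (inv_nonneg.2 (by positivity))

end Normalize

section MaxMultiple

variable {ι : Type*}

/-- The largest `λ` with `λ • g ≤ c`, for `0 ≤ c` and `0 ≤ g ≠ 0`. -/
def maxMultiple (c g : ι → ℝ) : ℝ :=
  (⨅ j, if 0 < g j then ENNReal.ofReal (c j / g j) else ⊤).toReal

lemma maxMultiple_smul_le {c g : ι → ℝ} (hc : 0 ≤ c) (hg : 0 ≤ g) : maxMultiple c g • g ≤ c := by
  intro j
  rcases (hg j).eq_or_lt with hgj | hgj
  · simpa [← hgj] using hc j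
  have hle : maxMultiple c g ≤ c j / g j := by
    refine (ENNReal.toReal_mono ENNReal.ofReal_ne_top (iInf_le_of_le j ?_)).trans_eq
      (ENNReal.toReal_ofReal (div_nonneg (hc j) hgj.le))
    exact (if_pos hgj).le
  simpa [le_div_iff₀ hgj] using hle

lemma exists_maxMultiple_mul_eq [Finite ι] {c g : ι → ℝ} (hc : 0 ≤ c) (hg : 0 ≤ g) (hg0 : g ≠ 0) :
    ∃ j, 0 < g j ∧ maxMultiple c g * g j = c j := by
  set r : ι → ℝ≥0∞ := fun j => if 0 < g j then ENNReal.ofReal (c j / g j) else ⊤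
  obtain ⟨i, hi⟩ : ∃ i, g i ≠ 0 := Function.ne_iff.1 hg0
  have hgi : 0 < g i := (hg i).lt_of_ne' hi
  have : Nonempty ι := ⟨i⟩
  obtain ⟨j, hj⟩ := exists_eq_ciInf_of_finite (f := r)
  have hrj : r j ≠ ⊤ := by
    rw [hj]
    exact ne_top_of_le_ne_top (by simp [r, hgi]) (iInf_le r i)
  have hgj : 0 < g j := by
    by_contra h
    exact hrj (by simp [r, h])
  refine ⟨j, hgj, ?_⟩
  have hmax : maxMultiple c g = c j / g j := by
    rw [maxMultiple, ← hj]
    simp [r, hgj, div_nonneg (hc j) hgj.le]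
  rw [hmax, div_mul_cancel₀ _ hgj.ne']

lemma Measurable.maxMultiple [Countable ι] {Ω : Type*} {mΩ : MeasurableSpace Ω} {c g : Ω → ι → ℝ}
    (hc : Measurable c) (hg : Measurable g) :
    Measurable fun ω => _root_.maxMultiple (c ω) (g ω) :=
  (Measurable.iInf fun j => Measurable.ite
    (measurableSet_lt measurable_const (measurable_pi_iff.1 hg j))
    ((measurable_pi_iff.1 hc j).div (measurable_pi_iff.1 hg j)).ennreal_ofReal
    measurable_const).ennreal_toReal

end MaxMultiple

section Cone

variable {Ω ι : Type*} [Fintype ι]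

/-- On `A`, `ζ` lies below the payoff `c ⬝ᵥ V` of a nonnegative `G`-measurable position `c`;
for `A = univ` this is membership in `{c ⬝ᵥ V : c ∈ L⁰₊(G)} - L⁰₊`. -/
def SuperhedgeableOn {m₀ : MeasurableSpace Ω} (P : Measure[m₀] Ω) (G : MeasurableSpace Ω)
    (V : Ω → ι → ℝ) (A : Set Ω) (ζ : Ω → ℝ) : Prop :=
  ∃ c : Ω → ι → ℝ, Measurable[G] c ∧ 0 ≤ c ∧ ∀ᵐ ω ∂P, ω ∈ A → ζ ω ≤ c ω ⬝ᵥ V ω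

def NoArbitrage {m₀ : MeasurableSpace Ω} (P : Measure[m₀] Ω) (G : MeasurableSpace Ω)
    (V : Ω → ι → ℝ) : Prop :=
  ∀ g : Ω → ι → ℝ, Measurable[G] g → 0 ≤ g → (∀ᵐ ω ∂P, 0 ≤ g ω ⬝ᵥ V ω) →
    ∀ᵐ ω ∂P, g ω ⬝ᵥ V ω = 0

def blowUpSet (c : ℕ → Ω → ι → ℝ) : Set Ω := {ω | Tendsto (fun n => ‖c n ω‖) atTop atTop}

variable {m₀ G : MeasurableSpace Ω} {P : Measure[m₀] Ω} {V : Ω → ι → ℝ} {A B : Set Ω} {ζ : Ω → ℝ}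

namespace SuperhedgeableOn

lemma empty : SuperhedgeableOn P G V ∅ ζ := ⟨0, measurable_const, le_rfl, by simp⟩

lemma mono (h : SuperhedgeableOn P G V B ζ) (hAB : A ⊆ B) : SuperhedgeableOn P G V A ζ :=
  let ⟨c, hc, hc0, hζ⟩ := h
  ⟨c, hc, hc0, hζ.mono fun _ h hA => h (hAB hA)⟩

lemma union (hA : MeasurableSet[G] A) (hζA : SuperhedgeableOn P G V A ζ)
    (hζB : SuperhedgeableOn P G V B ζ) : SuperhedgeableOn P G V (A ∪ B) ζ := by
  classical
  obtain ⟨c₁, hc₁, hc₁0, hζ₁⟩ := hζA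
  obtain ⟨c₂, hc₂, hc₂0, hζ₂⟩ := hζB
  refine ⟨A.piecewise c₁ c₂, hc₁.piecewise hA hc₂, fun ω => ?_, ?_⟩
  · by_cases hω : ω ∈ A
    · simpa [hω] using hc₁0 ω
    · simpa [hω] using hc₂0 ω
  · filter_upwards [hζ₁, hζ₂] with ω h₁ h₂ hω
    by_cases hωA : ω ∈ A
    · simpa [hωA] using h₁ hωA
    · simpa [hωA] using h₂ (hω.resolve_left hωA)

lemma biUnion {κ : Type*} {s : Finset κ} {A : κ → Set Ω}
    (hA : ∀ j ∈ s, MeasurableSet[G] (A j)) (h : ∀ j ∈ s, SuperhedgeableOn P G V (A j) ζ) :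
    SuperhedgeableOn P G V (⋃ j ∈ s, A j) ζ := by
  classical
  induction s using Finset.induction_on with
  | empty => simpa using empty
  | insert a s ha ih =>
    rw [Finset.set_biUnion_insert]
    exact union (hA a (mem_insert_self a s)) (h a (mem_insert_self a s))
      (ih (fun j hj => hA j (mem_insert_of_mem hj)) fun j hj => h j (mem_insert_of_mem hj))

end SuperhedgeableOn

variable {c : ℕ → Ω → ι → ℝ} {ξ : ℕ → Ω → ℝ}

lemma measurableSet_blowUpSet (hc : ∀ n, Measurable[G] (c n)) : MeasurableSet[G] (blowUpSet c) :=
  measurableSet_tendsto _ fun n => (hc n).norm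

lemma superhedgeableOn_diff_blowUpSet (hc : ∀ n, Measurable[G] (c n)) (hc0 : ∀ n, 0 ≤ c n)
    (hξζ : ∀ᵐ ω ∂P, ω ∈ A → Tendsto (ξ · ω) atTop (𝓝 (ζ ω)))
    (hξc : ∀ᵐ ω ∂P, ω ∈ A → ∀ n, ξ n ω ≤ c n ω ⬝ᵥ V ω) :
    SuperhedgeableOn P G V (A \ blowUpSet c) ζ := by
  obtain ⟨σ, hσ, l, hl, hcl⟩ := exists_isRandomSubseq_tendsto hc
  refine ⟨fun ω => l ω ⊔ (0 : ι → ℝ),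
    measurable_pi_iff.2 fun j => ((measurable_pi_apply j).comp hl).sup_const 0,
    fun ω => le_sup_right, ?_⟩
  filter_upwards [hξζ, hξc] with ω hζ hξ ⟨hA, hω⟩
  have hlim := hcl ω hω
  have hl0 : (0 : ι → ℝ) ≤ l ω := ge_of_tendsto hlim (.of_forall fun k => hc0 _ ω)
  rw [sup_of_le_left hl0]
  exact le_of_tendsto_of_tendsto' ((hζ hA).comp (hσ.tendsto_atTop ω))
    (((continuous_id.dotProduct continuous_const).tendsto _).comp hlim) fun k => hξ hA _

/-- Where the positions `c n` blow up, their normalisations accumulate at a nonzero direction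
`g` which, by no-arbitrage, has zero payoff. -/
lemma NoArbitrage.exists_null_direction (hNA : NoArbitrage P G V) (hA : MeasurableSet[G] A)
    (hc : ∀ n, Measurable[G] (c n)) (hc0 : ∀ n, 0 ≤ c n)
    (hξζ : ∀ᵐ ω ∂P, ω ∈ A → Tendsto (ξ · ω) atTop (𝓝 (ζ ω)))
    (hξc : ∀ᵐ ω ∂P, ω ∈ A → ∀ n, ξ n ω ≤ c n ω ⬝ᵥ V ω) :
    ∃ g : Ω → ι → ℝ, Measurable[G] g ∧ 0 ≤ g ∧
      (∀ ω j, (∀ n, c n ω j = 0) → g ω j = 0) ∧ (∀ ω ∈ A ∩ blowUpSet c, g ω ≠ 0) ∧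
      ∀ᵐ ω ∂P, ω ∈ A ∩ blowUpSet c → g ω ⬝ᵥ V ω = 0 := by
  set D := A ∩ blowUpSet c
  have hD : MeasurableSet[G] D := hA.inter (measurableSet_blowUpSet hc)
  set w : ℕ → Ω → ι → ℝ := fun n ω => (1 + ‖c n ω‖)⁻¹ • c n ω
  have hw : ∀ n, Measurable[G] (w n) := fun n =>
    ((measurable_const.add (hc n).norm).inv).smul (hc n)
  obtain ⟨σ, hσ, g, hg, hwg⟩ := exists_isRandomSubseq_tendsto_of_bounded_pi hw
  replace hwg : ∀ ω, Tendsto (fun k => w (σ ω k) ω) atTop (𝓝 (g ω)) := fun ω =>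
    hwg ω ⟨1, fun n => norm_inv_one_add_norm_smul_le_one _⟩
  have hg0 : 0 ≤ g := fun ω => ge_of_tendsto (hwg ω) (.of_forall fun k =>
    smul_nonneg (inv_nonneg.2 (by positivity)) (hc0 _ ω))
  have hgV : ∀ᵐ ω ∂P, ω ∈ D → 0 ≤ g ω ⬝ᵥ V ω := by
    filter_upwards [hξζ, hξc] with ω hζ hξ ⟨hA, hω⟩
    exact dotProduct_nonneg_of_tendsto_normalize (hω.comp (hσ.tendsto_atTop ω))
      ((hζ hA).comp (hσ.tendsto_atTop ω)) (fun k => hξ hA _) (hwg ω)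
  have hgs : ∀ ω j, (∀ n, c n ω j = 0) → g ω j = 0 := fun ω j hj =>
    tendsto_nhds_unique ((continuous_apply j).tendsto _ |>.comp (hwg ω))
      (by simp [Function.comp_def, w, hj])
  have hgD : ∀ ω ∈ D, g ω ≠ 0 := fun ω hω h => by
    have h1 : Tendsto (fun k => ‖w (σ ω k) ω‖) atTop (𝓝 1) :=
      (tendsto_norm_inv_one_add_norm_smul hω.2).comp (hσ.tendsto_atTop ω)
    have h0 : Tendsto (fun k => ‖w (σ ω k) ω‖) atTop (𝓝 0) := by
      simpa [h] using (hwg ω).norm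
    exact one_ne_zero (tendsto_nhds_unique h1 h0)
  refine ⟨D.indicator g, hg.indicator hD, Set.indicator_nonneg fun ω _ => hg0 ω,
    fun ω j hj => ?_, fun ω hω => by simpa [Set.indicator_of_mem hω] using hgD ω hω, ?_⟩
  · by_cases hω : ω ∈ D
    · simpa [Set.indicator_of_mem hω] using hgs ω j hj
    · simp [Set.indicator_of_notMem hω]
  · refine (hNA _ (hg.indicator hD) (Set.indicator_nonneg fun ω _ => hg0 ω) ?_).mono
      fun ω h _ => h
    filter_upwards [hgV] with ω h
    by_cases hω : ω ∈ D
    · simpa [Set.indicator_of_mem hω] using h hω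
    · simp [Set.indicator_of_notMem hω]

/-- Subtracting the largest multiple of the null direction keeps the payoff where the positions
blow up, and there kills a coordinate of every position. -/
lemma NoArbitrage.exists_reduction (hNA : NoArbitrage P G V) (hA : MeasurableSet[G] A)
    (s : Finset ι) (hc : ∀ n, Measurable[G] (c n)) (hc0 : ∀ n, 0 ≤ c n)
    (hcs : ∀ ω ∈ A, ∀ n, ∀ j ∉ s, c n ω j = 0)
    (hξζ : ∀ᵐ ω ∂P, ω ∈ A → Tendsto (ξ · ω) atTop (𝓝 (ζ ω)))
    (hξc : ∀ᵐ ω ∂P, ω ∈ A → ∀ n, ξ n ω ≤ c n ω ⬝ᵥ V ω) :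
    ∃ c' : ℕ → Ω → ι → ℝ, (∀ n, Measurable[G] (c' n)) ∧ (∀ n, 0 ≤ c' n) ∧
      (∀ ω ∈ A, ∀ n, ∀ j ∉ s, c' n ω j = 0) ∧
      (∀ ω ∈ A ∩ blowUpSet c, ∀ n, ∃ j ∈ s, c' n ω j = 0) ∧
      ∀ᵐ ω ∂P, ω ∈ A ∩ blowUpSet c → ∀ n, ξ n ω ≤ c' n ω ⬝ᵥ V ω := by
  obtain ⟨g, hg, hg0, hgs, hgD, hgV⟩ := hNA.exists_null_direction hA hc hc0 hξζ hξc
  refine ⟨fun n ω => c n ω - maxMultiple (c n ω) (g ω) • g ω,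
    fun n => (hc n).sub (((hc n).maxMultiple hg).smul hg),
    fun n ω => sub_nonneg.2 (maxMultiple_smul_le (hc0 n ω) (hg0 ω)), ?_, ?_, ?_⟩
  · intro ω hω n j hj
    simp [hcs ω hω n j hj, hgs ω j fun n => hcs ω hω n j hj]
  · intro ω hω n
    obtain ⟨j, hgj, hj⟩ := exists_maxMultiple_mul_eq (hc0 n ω) (hg0 ω) (hgD ω hω)
    refine ⟨j, ?_, by simp [hj]⟩
    by_contra hjs
    exact hgj.ne' (hgs ω j fun n => hcs ω hω.1 n j hjs)
  · filter_upwards [hξc, hgV] with ω hξ hgV hω n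
    simpa [sub_dotProduct, smul_dotProduct, hgV hω] using hξ hω.1 n

theorem NoArbitrage.superhedgeableOn_of_tendsto_of_support (hNA : NoArbitrage P G V)
    (s : Finset ι) (hA : MeasurableSet[G] A) (hc : ∀ n, Measurable[G] (c n))
    (hc0 : ∀ n, 0 ≤ c n) (hcs : ∀ ω ∈ A, ∀ n, ∀ j ∉ s, c n ω j = 0)
    (hξζ : ∀ᵐ ω ∂P, ω ∈ A → Tendsto (ξ · ω) atTop (𝓝 (ζ ω)))
    (hξc : ∀ᵐ ω ∂P, ω ∈ A → ∀ n, ξ n ω ≤ c n ω ⬝ᵥ V ω) :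
    SuperhedgeableOn P G V A ζ := by
  classical
  induction s using Finset.strongInduction generalizing A c ξ with
  | H s ih =>
  obtain ⟨c', hc', hc'0, hc's, hc'zero, hξc'⟩ := hNA.exists_reduction hA s hc hc0 hcs hξζ hξc
  set Z : ι → Set Ω := fun j => A ∩ blowUpSet c ∩ {ω | ∃ᶠ n in atTop, c' n ω j = 0}
  have hZ : ∀ j, MeasurableSet[G] (Z j) := fun j =>
    (hA.inter (measurableSet_blowUpSet hc)).inter (measurableSet_frequently_atTop fun n =>
      measurable_pi_iff.1 (hc' n) j (measurableSet_singleton 0))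
  have hcover : A ⊆ A \ blowUpSet c ∪ ⋃ j ∈ s, Z j := by
    intro ω hω
    by_cases hT : ω ∈ blowUpSet c
    · obtain ⟨j, hj, hfreq⟩ :=
        (frequently_exists_finset s).1 (.of_forall (f := atTop) (hc'zero ω ⟨hω, hT⟩))
      exact .inr (Set.mem_biUnion hj ⟨⟨hω, hT⟩, hfreq⟩)
    · exact .inl ⟨hω, hT⟩
  refine (((superhedgeableOn_diff_blowUpSet hc hc0 hξζ hξc).union
    (hA.diff (measurableSet_blowUpSet hc))
    (SuperhedgeableOn.biUnion (fun j _ => hZ j) fun j hj => ?_)).mono hcover)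
  -- on `Z j`, follow a random subsequence along which the `j`-th coordinate vanishes
  obtain ⟨ρ, hρ, hρj⟩ := exists_isRandomSubseq_mem (fun _ n => {ω | c' n ω j = 0})
    fun _ n => measurable_pi_iff.1 (hc' n) j (measurableSet_singleton 0)
  refine ih (s.erase j) (erase_ssubset hj) (hZ j) (hρ.measurable_reindex hc')
    (fun k ω => hc'0 _ ω) (fun ω hω k i hi => ?_)
    (hξζ.mono fun ω h hω => (h hω.1.1).comp (hρ.tendsto_atTop ω))
    (hξc'.mono fun ω h hω k => h hω.1 _)
  rcases eq_or_ne i j with rfl | hij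
  · exact hρj ω k (hω.2.forall_exists_of_atTop k)
  · exact hc's ω hω.1.1 _ i fun his => hi (mem_erase.2 ⟨hij, his⟩)

theorem NoArbitrage.superhedgeable_of_tendsto (hNA : NoArbitrage P G V)
    (hξ : ∀ n, SuperhedgeableOn P G V Set.univ (ξ n))
    (hξζ : ∀ᵐ ω ∂P, Tendsto (ξ · ω) atTop (𝓝 (ζ ω))) :
    SuperhedgeableOn P G V Set.univ ζ := by
  choose c hc hc0 hξc using hξ
  exact hNA.superhedgeableOn_of_tendsto_of_support Finset.univ .univ hc hc0 (by simp)
    (hξζ.mono fun _ h _ => h) ((ae_all_iff.2 hξc).mono fun _ h _ n => h n trivial)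

end Cone

lemma Measurable.sumElim_pi {Ω α β : Type*} {mΩ : MeasurableSpace Ω} {u : Ω → α → ℝ}
    {v : Ω → β → ℝ} (hu : Measurable u) (hv : Measurable v) :
    Measurable fun ω => Sum.elim (u ω) (v ω) :=
  measurable_pi_iff.2 fun
    | .inl i => measurable_pi_iff.1 hu i
    | .inr i => measurable_pi_iff.1 hv i

lemma aestronglyMeasurable_of_tendsto_ae' {Ω β : Type*} [TopologicalSpace β]
    [TopologicalSpace.IsCompletelyMetrizableSpace β] [Nonempty β] {m₀ m : MeasurableSpace Ω}
    {P : Measure[m₀] Ω} {f : ℕ → Ω → β} {g : Ω → β} (hf : ∀ n, AEStronglyMeasurable[m] (f n) P)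
    (hfg : ∀ᵐ ω ∂P, Tendsto (f · ω) atTop (𝓝 (g ω))) : AEStronglyMeasurable[m] g P := by
  choose f' hf' hff' using hf
  refine ⟨fun ω => limUnder atTop (f' · ω), StronglyMeasurable.limUnder hf', ?_⟩
  filter_upwards [hfg, ae_all_iff.2 hff'] with ω h₁ h₂
  exact ((h₁.congr h₂).limUnder_eq).symm

namespace BidAskFTAP

variable {Ω : Type*} {d : ℕ} {F : ℕ → MeasurableSpace Ω} {Sb Sa : ℕ → Ω → Fin d → ℝ} {t k : ℕ}

/-- Gains of the `2d` round trips from `t - 1` to `t + k`: `Sum.inl i` buys one unit of asset `i`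
at the ask and sells it at the bid, `Sum.inr i` sells short at the bid and buys back at the ask. -/
def roundTripGain (Sb Sa : ℕ → Ω → Fin d → ℝ) (t k : ℕ) (ω : Ω) : Fin d ⊕ Fin d → ℝ :=
  Sum.elim (Sb (t + k) ω - Sa (t - 1) ω) (Sb (t - 1) ω - Sa (t + k) ω)

lemma dotp_sub_dotp_eq_dotProduct_roundTripGain (Hp Hm : Fin d → ℝ) (ω : Ω) :
    dotp Hp (Sb (t + k) ω - Sa (t - 1) ω) - dotp Hm (Sa (t + k) ω - Sb (t - 1) ω) =
      Sum.elim Hp Hm ⬝ᵥ roundTripGain Sb Sa t k ω := by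
  rw [roundTripGain, sumElim_dotProduct_sumElim, ← neg_sub (Sa (t + k) ω), dotProduct_neg]
  rfl

lemma measurable_roundTripGain {T : ℕ} (hF : Monotone F) (hSb : AdaptedProc F T Sb)
    (hSa : AdaptedProc F T Sa) (htk : t + k ≤ T) :
    Measurable[F (t + k)] (roundTripGain Sb Sa t k) := by
  have hle : F (t - 1) ≤ F (t + k) := hF (by omega)
  exact Measurable.sumElim_pi (u := fun ω => Sb (t + k) ω - Sa (t - 1) ω)
    (v := fun ω => Sb (t - 1) ω - Sa (t + k) ω)
    ((hSb _ htk).sub ((hSa _ (by omega)).mono hle le_rfl))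
    (((hSb _ (by omega)).mono hle le_rfl).sub (hSa _ htk))

variable [MeasurableSpace Ω] {P : Measure Ω} {f : Ω → ℝ}

lemma memFtk_iff : memFtk P F Sb Sa t k f ↔
    ∃ c : Ω → Fin d ⊕ Fin d → ℝ, Measurable[F (t - 1)] c ∧ 0 ≤ c ∧
      ∃ r : Ω → ℝ, Measurable[F (t + k)] r ∧ (∀ᵐ ω ∂P, 0 ≤ r ω) ∧
        f =ᵐ[P] fun ω => c ω ⬝ᵥ roundTripGain Sb Sa t k ω - r ω := by
  constructor
  · rintro ⟨Hp, Hm, r, hHp, hHm, hHp0, hHm0, hr, hr0, hf⟩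
    refine ⟨fun ω => Sum.elim (Hp ω) (Hm ω), hHp.sumElim_pi hHm, fun ω => ?_, r, hr, hr0, ?_⟩
    · rintro (i | i)
      exacts [hHp0 ω i, hHm0 ω i]
    · simpa only [dotp_sub_dotp_eq_dotProduct_roundTripGain] using hf
  · rintro ⟨c, hc, hc0, r, hr, hr0, hf⟩
    refine ⟨fun ω i => c ω (.inl i), fun ω i => c ω (.inr i), r,
      (measurable_pi_lambda _ fun i => measurable_pi_apply (Sum.inl i)).comp hc,
      (measurable_pi_lambda _ fun i => measurable_pi_apply (Sum.inr i)).comp hc,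
      fun ω i => hc0 ω _, fun ω i => hc0 ω _, hr, hr0, ?_⟩
    have hc' : ∀ ω, Sum.elim (fun i => c ω (.inl i)) (fun i => c ω (.inr i)) = c ω := fun ω => by
      ext (i | i) <;> rfl
    simpa only [dotp_sub_dotp_eq_dotProduct_roundTripGain, hc'] using hf

lemma superhedgeableOn_of_memFtk (h : memFtk P F Sb Sa t k f) :
    SuperhedgeableOn P (F (t - 1)) (roundTripGain Sb Sa t k) Set.univ f := by
  obtain ⟨c, hc, hc0, r, -, hr0, hf⟩ := memFtk_iff.1 h
  refine ⟨c, hc, hc0, ?_⟩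
  filter_upwards [hf, hr0] with ω hf hr0 _
  rw [hf]
  linarith

lemma aestronglyMeasurable_of_memFtk (hF : F (t - 1) ≤ F (t + k))
    (hV : Measurable[F (t + k)] (roundTripGain Sb Sa t k)) (h : memFtk P F Sb Sa t k f) :
    AEStronglyMeasurable[F (t + k)] f P := by
  obtain ⟨c, hc, -, r, hr, -, hf⟩ := memFtk_iff.1 h
  exact ⟨_, ((continuous_fst.dotProduct continuous_snd).measurable.comp
    ((hc.mono hF le_rfl).prodMk hV) |>.sub hr).stronglyMeasurable, hf⟩

lemma memFtk_of_superhedgeableOn (hF : F (t - 1) ≤ F (t + k))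
    (hV : Measurable[F (t + k)] (roundTripGain Sb Sa t k))
    (hf : AEStronglyMeasurable[F (t + k)] f P)
    (h : SuperhedgeableOn P (F (t - 1)) (roundTripGain Sb Sa t k) Set.univ f) :
    memFtk P F Sb Sa t k f := by
  obtain ⟨c, hc, hc0, hfc⟩ := h
  obtain ⟨f', hf', hff'⟩ := hf
  refine memFtk_iff.2 ⟨c, hc, hc0, fun ω => c ω ⬝ᵥ roundTripGain Sb Sa t k ω - f' ω,
    (continuous_fst.dotProduct continuous_snd).measurable.comp
      ((hc.mono hF le_rfl).prodMk hV) |>.sub hf'.measurable, ?_, ?_⟩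
  · filter_upwards [hfc, hff'] with ω h₁ h₂
    linarith [h₁ trivial]
  · filter_upwards [hff'] with ω h
    rw [h]
    ring

lemma noArbitrage_roundTripGain
    (hNA : ∀ f : Ω → ℝ, memFtk P F Sb Sa t k f → (∀ᵐ ω ∂P, 0 ≤ f ω) → f =ᵐ[P] 0) :
    NoArbitrage P (F (t - 1)) (roundTripGain Sb Sa t k) := fun g hg hg0 hgV =>
  hNA _ (memFtk_iff.2 ⟨g, hg, hg0, 0, measurable_const, .of_forall fun _ => le_rfl,
    .of_forall fun ω => by simp⟩) hgV

end BidAskFTAP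

open BidAskFTAP in
theorem stmt9_general {Ω : Type*} [m : MeasurableSpace Ω] {d T : ℕ}
    (P : MeasureTheory.Measure Ω)
    (F : ℕ → MeasurableSpace Ω) (hF : IsFiltration F T)
    (Sb Sa : ℕ → Ω → Fin d → ℝ) (hBA : IsBidAsk P F T Sb Sa)
    (t k : ℕ) (htk : t + k ≤ T)
    (hNA : ∀ f : Ω → ℝ, memFtk P F Sb Sa t k f → (∀ᵐ ω ∂P, 0 ≤ f ω) → f =ᵐ[P] 0) :
    ∀ (ξ : ℕ → Ω → ℝ) (ζ : Ω → ℝ),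
      (∀ n, memFtk P F Sb Sa t k (ξ n)) →
      MeasureTheory.TendstoInMeasure P ξ Filter.atTop ζ →
      memFtk P F Sb Sa t k ζ := by
  intro ξ ζ hξ hξζ
  have hF' : F (t - 1) ≤ F (t + k) := hF.1 (by omega)
  have hV := measurable_roundTripGain hF.1 hBA.1 hBA.2.1 htk
  obtain ⟨ns, -, hns⟩ := hξζ.exists_seq_tendsto_ae
  exact memFtk_of_superhedgeableOn hF' hV
    (aestronglyMeasurable_of_tendsto_ae'
      (fun n => aestronglyMeasurable_of_memFtk hF' hV (hξ (ns n))) hns)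
    ((noArbitrage_roundTripGain hNA).superhedgeable_of_tendsto
      (fun n => superhedgeableOn_of_memFtk (hξ (ns n))) hns)

open BidAskFTAP in
/-- (Fundamental theorem, (c) ⇒ (d)) Fix `1 ≤ t ≤ t+k ≤ T`. If
`F_{t-1,t+k} ∩ L⁰₊(𝓕_{t+k}) = {0}`, then `F_{t-1,t+k}` is closed under convergence in
probability. -/
theorem stmt9 {Ω : Type*} [m : MeasurableSpace Ω] {d T : ℕ}
    (P : MeasureTheory.Measure Ω) [MeasureTheory.IsProbabilityMeasure P]
    (hcomp : P.IsComplete)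
    (F : ℕ → MeasurableSpace Ω) (hF : IsFiltration F T)
    (Sb Sa : ℕ → Ω → Fin d → ℝ) (hBA : IsBidAsk P F T Sb Sa)
    (t k : ℕ) (ht : 1 ≤ t) (htk : t + k ≤ T)
    (hNA : ∀ f : Ω → ℝ, memFtk P F Sb Sa t k f → (∀ᵐ ω ∂P, 0 ≤ f ω) → f =ᵐ[P] 0) :
    ∀ (ξ : ℕ → Ω → ℝ) (ζ : Ω → ℝ),
      (∀ n, memFtk P F Sb Sa t k (ξ n)) →
      MeasureTheory.TendstoInMeasure P ξ Filter.atTop ζ →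
      memFtk P F Sb Sa t k ζ :=
  stmt9_general (m := m) P F hF Sb Sa hBA t k htk hNA
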